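/- arXiv:1401.0459 — 2 statements merged into one kernel-verified Lean document; each statement's English description precedes it below -/
import Mathlib

section
/- Let (R, m) be a quasi-local commutative ring with m² = (0). Then R is a Gaussian ring: for all polynomials f, g ∈ R[X], c(fg) = c(f)·c(g). -/
open Polynomial

/-- A proper ideal `I` is `n`-absorbing if whenever a product of `n+1` elements lies in `I`,
the product of some `n` of them lies in `I`. -/
def IsNAbsorbing {R : Type*} [CommRing R] (I : Ideal R) (n : ℕ) : Prop :=
  I ≠ ⊤ ∧ ∀ x : Fin (n + 1) → R, (∏ i, x i) ∈ I →
    ∃ j, (∏ i ∈ Finset.univ.erase j, x i) ∈ I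

/-- A proper ideal `I` is strongly `n`-absorbing if whenever a product of `n+1` ideals is
contained in `I`, the product of some `n` of them is contained in `I`. -/
def IsStronglyNAbsorbing {R : Type*} [CommRing R] (I : Ideal R) (n : ℕ) : Prop :=
  I ≠ ⊤ ∧ ∀ J : Fin (n + 1) → Ideal R, (∏ i, J i) ≤ I →
    ∃ j, (∏ i ∈ Finset.univ.erase j, J i) ≤ I

/-- The content of a polynomial: the ideal generated by its coefficients. -/
def polyContent {R : Type*} [CommRing R] (f : R[X]) : Ideal R :=
  Ideal.span (Set.range f.coeff)

/-!
Always `c(fg) ≤ c(f) c(g)`, and in a local ring every content ideal is either `⊤` or inside `m`.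
If both contents lie in `m`, then `c(f) c(g) ≤ m² = 0`. If both are `⊤`, so is `c(fg)`
(Gauss's lemma). In the mixed case `c(f) = ⊤`, `c(g) ≤ m`, let `fᵢ` be the first unit
coefficient of `f`. The earlier coefficients of `f` lie in `m` and so kill every coefficient
of `g`, hence `(fg)ᵢ₊ₙ = fᵢ gₙ + (terms involving only g₀, …, gₙ₋₁)`, and induction on `n`
puts every `gₙ` into `c(fg)`.
-/

namespace Polynomial

open Ideal IsLocalRing

variable {R : Type*} [CommRing R]

theorem span_range_coeff_eq_contentIdeal (p : R[X]) :
    span (Set.range p.coeff) = p.contentIdeal := by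
  refine le_antisymm (span_le.2 <| Set.range_subset_iff.2 p.coeff_mem_contentIdeal)
    (span_mono fun r hr => ?_)
  obtain ⟨n, -, rfl⟩ := mem_coeffs_iff.1 hr
  exact ⟨n, rfl⟩

theorem contentIdeal_le_iff {p : R[X]} {I : Ideal R} :
    p.contentIdeal ≤ I ↔ ∀ n, p.coeff n ∈ I := by
  rw [← span_range_coeff_eq_contentIdeal, span_le, Set.range_subset_iff]
  rfl

open Finset.HasAntidiagonal in
theorem coeff_mem_contentIdeal_mul {p q : R[X]} {i : ℕ} (hi : IsUnit (p.coeff i))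
    (hlow : ∀ j < i, ∀ k, p.coeff j * q.coeff k = 0) (n : ℕ) :
    q.coeff n ∈ (p * q).contentIdeal := by
  induction n using Nat.strong_induction_on with
  | _ n ih =>
    have hrest : ∑ x ∈ (antidiagonal (i + n)).erase (i, n), p.coeff x.1 * q.coeff x.2
        ∈ (p * q).contentIdeal := by
      refine sum_mem fun ⟨j, k⟩ hjk => ?_
      obtain ⟨hne, hjk⟩ := Finset.mem_erase.1 hjk
      rw [mem_antidiagonal] at hjk
      have hji : j ≠ i := by
        rintro rfl
        exact hne (Prod.ext rfl (by omega))
      rcases hji.lt_or_gt with hj | hj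
      · rw [hlow j hj k]
        exact zero_mem _
      · exact mul_mem_left _ _ (ih k (by omega))
    have hcoeff := (p * q).coeff_mem_contentIdeal (i + n)
    rw [coeff_mul, ← Finset.add_sum_erase _ _ (a := (i, n)) (mem_antidiagonal.2 rfl)] at hcoeff
    exact (unit_mul_mem_iff_mem _ hi).1 ((Ideal.add_mem_iff_left _ hrest).1 hcoeff)

variable [IsLocalRing R]

theorem exists_isUnit_coeff_of_contentIdeal_eq_top {p : R[X]} (hp : p.contentIdeal = ⊤) :
    ∃ i, IsUnit (p.coeff i) := by
  by_contra! h
  have hle : p.contentIdeal ≤ maximalIdeal R :=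
    contentIdeal_le_iff.2 fun n => (mem_maximalIdeal _).2 (h n)
  exact (maximalIdeal.isMaximal R).ne_top (top_le_iff.1 (hp ▸ hle))

theorem contentIdeal_le_contentIdeal_mul_of_eq_top {p q : R[X]} (hp : p.contentIdeal = ⊤)
    (hq : maximalIdeal R * q.contentIdeal = ⊥) : q.contentIdeal ≤ (p * q).contentIdeal := by
  classical
  have hunit := exists_isUnit_coeff_of_contentIdeal_eq_top hp
  refine contentIdeal_le_iff.2 (coeff_mem_contentIdeal_mul (Nat.find_spec hunit) fun j hj k => ?_)
  have hmem := mul_mem_mul ((mem_maximalIdeal _).2 (Nat.find_min hunit hj))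
    (q.coeff_mem_contentIdeal k)
  rwa [hq, mem_bot] at hmem

end Polynomial

/-- A quasi-local ring whose maximal ideal squares to zero is Gaussian. -/
theorem polyContent_mul_of_local_sq_zero {R : Type*} [CommRing R] [IsLocalRing R]
    (hm : (IsLocalRing.maximalIdeal R) ^ 2 = ⊥) (f g : R[X]) :
    polyContent (f * g) = polyContent f * polyContent g := by
  simp only [polyContent, span_range_coeff_eq_contentIdeal]
  have hsq {I J : Ideal R} (hI : I ≤ IsLocalRing.maximalIdeal R)
      (hJ : J ≤ IsLocalRing.maximalIdeal R) : I * J = ⊥ :=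
    le_bot_iff.1 (hm ▸ pow_two (IsLocalRing.maximalIdeal R) ▸ Ideal.mul_mono hI hJ)
  refine le_antisymm (contentIdeal_mul_le_mul_contentIdeal f g) ?_
  rcases eq_or_ne f.contentIdeal ⊤ with hf | hf <;>
    rcases eq_or_ne g.contentIdeal ⊤ with hg | hg
  · rw [contentIdeal_mul_eq_top_of_contentIdeal_eq_top hf hg]
    exact le_top
  · rw [hf, Ideal.top_mul]
    exact contentIdeal_le_contentIdeal_mul_of_eq_top hf
      (hsq le_rfl (IsLocalRing.le_maximalIdeal hg))
  · rw [hg, Ideal.mul_top, mul_comm f]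
    exact contentIdeal_le_contentIdeal_mul_of_eq_top hg
      (hsq le_rfl (IsLocalRing.le_maximalIdeal hf))
  · rw [hsq (IsLocalRing.le_maximalIdeal hf) (IsLocalRing.le_maximalIdeal hg)]
    exact bot_le
end

section
/- Let R be a Prüfer domain and I an ideal of R that is n-absorbing for a positive integer n. Then I[X] is an n-absorbing ideal of R[X]. -/
open Polynomial

/-- A Prüfer domain: every nonzero finitely generated ideal is invertible as a fractional
ideal. -/
def IsPruferDomain (R : Type*) [CommRing R] [IsDomain R] : Prop :=
  ∀ I : Ideal R, I.FG → I ≠ ⊥ →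
    ∃ J : FractionalIdeal (nonZeroDivisors R) (FractionRing R),
      (I : FractionalIdeal (nonZeroDivisors R) (FractionRing R)) * J = 1

/-!
Localized at a prime `P`, a Prüfer domain becomes a valuation ring: invertibility of `(a, b)`
yields `p + s = 1` with `b p = a q` and `a s = b r`, and `p` or `s` is a unit at `P`. Over a
valuation ring the content of a polynomial is generated by one of its coefficients; dividing these
out leaves polynomials that survive in the residue field. This gives Gauss's inequality
`c(f₀) ⋯ c(fₙ) ≤ c(f₀ ⋯ fₙ)` locally, hence over `R`, so `f₀ ⋯ fₙ ∈ I[X]` forces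
`c(f₀) ⋯ c(fₙ) ≤ I`.

To absorb, replace each `c(fᵢ)` by one element `aᵢ ∈ c(fᵢ)` generating it locally at finitely many
maximal ideals at once (a Chinese-remainder combination of local generators). If no
`∏_{i ≠ j} c(fᵢ)` lay in `I`, pick `xⱼ ∈ ∏_{i ≠ j} c(fᵢ)` and maximal ideals `Mⱼ` with
`xⱼ ∉ I_{Mⱼ}`. Absorption applied to the `aᵢ` puts some `∏_{i ≠ k} aᵢ` in `I`, and that element
generates `∏_{i ≠ k} c(fᵢ) ∋ x_k` at `M_k`: a contradiction.
-/

section Content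

variable {R : Type*} [CommRing R]

theorem coeff_mem_polyContent (f : R[X]) (k : ℕ) : f.coeff k ∈ polyContent f :=
  Ideal.subset_span ⟨k, rfl⟩

theorem polyContent_le_iff_mem_map_C {f : R[X]} {I : Ideal R} :
    polyContent f ≤ I ↔ f ∈ I.map C :=
  Ideal.span_le.trans (Set.range_subset_iff.trans Ideal.mem_map_C_iff.symm)

theorem polyContent_le_span_singleton_iff {f : R[X]} {a : R} :
    polyContent f ≤ Ideal.span {a} ↔ ∀ k, a ∣ f.coeff k := by
  simp only [polyContent, Ideal.span_le, Set.range_subset_iff, SetLike.mem_coe,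
    Ideal.mem_span_singleton]

theorem polyContent_map {S : Type*} [CommRing S] (φ : R →+* S) (f : R[X]) :
    (polyContent f).map φ = polyContent (f.map φ) := by
  simp only [polyContent, Ideal.map_span, ← Set.range_comp, Function.comp_def, ← coeff_map]

theorem prod_mem_map_C_of_prod_polyContent_le {ι : Type*} {s : Finset ι} {f : ι → R[X]}
    {I : Ideal R} (h : ∏ i ∈ s, polyContent (f i) ≤ I) : ∏ i ∈ s, f i ∈ I.map C := by
  refine Ideal.map_mono h ?_
  rw [← Ideal.mapHom_apply, map_prod]
  exact Ideal.prod_mem_prod fun i _ => polyContent_le_iff_mem_map_C.mp le_rfl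

end Content

theorem exists_coeff_prod_dvd_prod_coeff {A : Type*} [CommRing A] [IsDomain A] [IsLocalRing A]
    {ι : Type*} (s : Finset ι) (f : ι → A[X]) (d : ι → ℕ)
    (hd : ∀ i k, (f i).coeff (d i) ∣ (f i).coeff k) :
    ∃ k, (∏ i ∈ s, f i).coeff k ∣ ∏ i ∈ s, (f i).coeff (d i) := by
  by_cases h0 : ∏ i ∈ s, (f i).coeff (d i) = 0
  · exact ⟨0, h0 ▸ dvd_zero _⟩
  -- `f i = C Dᵢ * g i` with `(g i).coeff (d i) = 1`, so `∏ g i` is nonzero over the residue field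
  choose g hg using fun i => (C_dvd_iff_dvd_coeff _ (f i)).mpr (hd i)
  have hg1 : ∀ i ∈ s, (g i).coeff (d i) = 1 := fun i hi => by
    have := congrArg (coeff · (d i)) (hg i)
    simp only [coeff_C_mul] at this
    exact mul_left_cancel₀ (Finset.prod_ne_zero_iff.mp h0 i hi) (by rw [mul_one]; exact this.symm)
  have hprod : ∏ i ∈ s, f i = C (∏ i ∈ s, (f i).coeff (d i)) * ∏ i ∈ s, g i := by
    rw [map_prod, ← Finset.prod_mul_distrib]
    exact Finset.prod_congr rfl fun i _ => hg i
  have hne : (∏ i ∈ s, g i).map (IsLocalRing.residue A) ≠ 0 := by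
    rw [Polynomial.map_prod, Finset.prod_ne_zero_iff]
    intro i hi h
    simpa [hg1 i hi] using congrArg (coeff · (d i)) h
  have hunit := leadingCoeff_ne_zero.mpr hne
  rw [leadingCoeff, coeff_map, IsLocalRing.residue_ne_zero_iff_isUnit] at hunit
  exact ⟨_, by rw [hprod, coeff_C_mul, hunit.mul_right_dvd]⟩

theorem IsLocalRing.add_mul_sub_dvd_self {A : Type*} [CommRing A] [IsLocalRing A] {x y m : A}
    (hm : m ∈ maximalIdeal A) (h : x ∣ y) : x + m * (y - x) ∣ x := by
  obtain ⟨c, rfl⟩ := h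
  have hu : IsUnit (1 + m * (c - 1)) := by
    simpa using isUnit_one_sub_self_of_mem_nonunits _
      ((maximalIdeal A).neg_mem ((maximalIdeal A).mul_mem_right (c - 1) hm))
  rw [show x + m * (x * c - x) = x * (1 + m * (c - 1)) by ring, hu.mul_right_dvd]

namespace ValuationRing

variable {V : Type*} [CommRing V] [IsDomain V] [ValuationRing V]

theorem exists_coeff_dvd (f : V[X]) : ∃ i, ∀ k, f.coeff i ∣ f.coeff k := by
  classical
  obtain ⟨i, -, hi⟩ := Finset.exists_max_image (Finset.range (f.natDegree + 1))
    (fun k => Ideal.span {f.coeff k}) ⟨0, by simp⟩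
  refine ⟨i, fun k => ?_⟩
  rcases lt_or_ge f.natDegree k with hk | hk
  · rw [coeff_eq_zero_of_natDegree_lt hk]
    exact dvd_zero _
  · exact Ideal.span_singleton_le_span_singleton.mp (hi k (Finset.mem_range_succ_iff.mpr hk))

theorem prod_polyContent_le {ι : Type*} (s : Finset ι) (f : ι → V[X]) :
    ∏ i ∈ s, polyContent (f i) ≤ polyContent (∏ i ∈ s, f i) := by
  choose d hd using fun i => exists_coeff_dvd (f i)
  obtain ⟨k, hk⟩ := exists_coeff_prod_dvd_prod_coeff s f d hd
  calc ∏ i ∈ s, polyContent (f i)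
      ≤ ∏ i ∈ s, Ideal.span {(f i).coeff (d i)} :=
        Finset.prod_le_prod' fun i _ => polyContent_le_span_singleton_iff.mpr (hd i)
    _ = Ideal.span {∏ i ∈ s, (f i).coeff (d i)} := Ideal.prod_span_singleton _ _
    _ ≤ Ideal.span {(∏ i ∈ s, f i).coeff k} := Ideal.span_singleton_le_span_singleton.mpr hk
    _ ≤ polyContent (∏ i ∈ s, f i) :=
        (Ideal.span_singleton_le_iff_mem _).mpr (coeff_mem_polyContent _ _)

end ValuationRing

section DividesAt

variable {R : Type*} [CommRing R]

/-- Together with `a ∈ J`, this says `J R_P = a R_P`. -/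
def DividesAt (P : Ideal R) [P.IsPrime] (a : R) (J : Ideal R) : Prop :=
  J.map (algebraMap R (Localization.AtPrime P)) ≤
    Ideal.span {algebraMap R (Localization.AtPrime P) a}

theorem DividesAt.add_mul_sub {P : Ideal R} [P.IsPrime] {a b e : R} {J : Ideal R}
    (h : DividesAt P a J) (hb : b ∈ J) (he : e ∈ P) : DividesAt P (a + e * (b - a)) J := by
  refine h.trans (Ideal.span_singleton_le_span_singleton.mpr ?_)
  simp only [map_add, map_mul, map_sub]
  exact IsLocalRing.add_mul_sub_dvd_self
    ((IsLocalization.AtPrime.to_map_mem_maximal_iff _ P e).mpr he)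
    (Ideal.mem_span_singleton.mp (h (Ideal.mem_map_of_mem _ hb)))

theorem DividesAt.prod {P : Ideal R} [P.IsPrime] {ι : Type*} {s : Finset ι} {a : ι → R}
    {J : ι → Ideal R} (h : ∀ i ∈ s, DividesAt P (a i) (J i)) :
    DividesAt P (∏ i ∈ s, a i) (∏ i ∈ s, J i) := by
  rw [DividesAt, ← Ideal.mapHom_apply, map_prod, map_prod, ← Ideal.prod_span_singleton]
  exact Finset.prod_le_prod' h

theorem exists_mem_forall_dividesAt (F : Finset (MaximalSpectrum R)) (J : Ideal R)
    (hJ : ∀ P ∈ F, ∃ a ∈ J, DividesAt P.asIdeal a J) :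
    ∃ a ∈ J, ∀ P ∈ F, DividesAt P.asIdeal a J := by
  classical
  induction F using Finset.induction with
  | empty => exact ⟨0, J.zero_mem, by simp⟩
  | insert P F hP ih =>
    obtain ⟨a, haJ, ha⟩ := ih fun Q hQ => hJ Q (Finset.mem_insert_of_mem hQ)
    obtain ⟨b, hbJ, hb⟩ := hJ P (Finset.mem_insert_self P F)
    -- `a + e * (b - a)` is `a` modulo every `Q ∈ F` and `b` modulo `P`
    obtain ⟨e, heF, heP⟩ : ∃ e ∈ F.inf MaximalSpectrum.asIdeal, 1 - e ∈ P.asIdeal := by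
      have : ¬ F.inf MaximalSpectrum.asIdeal ≤ P.asIdeal := by
        rw [P.isMaximal.isPrime.inf_le']
        rintro ⟨Q, hQ, hle⟩
        exact hP (MaximalSpectrum.ext (Q.isMaximal.eq_of_le P.isMaximal.ne_top hle) ▸ hQ)
      obtain ⟨x, hxF, hxP⟩ := SetLike.not_le_iff_exists.mp this
      obtain ⟨y, i, hi, hyi⟩ := P.isMaximal.exists_inv hxP
      exact ⟨y * x, Ideal.mul_mem_left _ _ hxF, by rwa [← hyi, add_sub_cancel_left]⟩
    refine ⟨a + e * (b - a), J.add_mem haJ (J.mul_mem_left _ (J.sub_mem hbJ haJ)), ?_⟩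
    intro Q hQ
    rcases Finset.mem_insert.mp hQ with rfl | hQ
    · have := hb.add_mul_sub haJ heP
      rwa [show b + (1 - e) * (a - b) = a + e * (b - a) by ring] at this
    · exact (ha Q hQ).add_mul_sub hbJ (Finset.inf_le (f := MaximalSpectrum.asIdeal) hQ heF)

theorem IsNAbsorbing.exists_prod_erase_le {I : Ideal R} {n : ℕ} (hI : IsNAbsorbing I n)
    (J : Fin (n + 1) → Ideal R)
    (hJ : ∀ i (P : MaximalSpectrum R), ∃ a ∈ J i, DividesAt P.asIdeal a (J i))
    (hle : ∏ i, J i ≤ I) : ∃ j, ∏ i ∈ Finset.univ.erase j, J i ≤ I := by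
  classical
  by_contra! hne
  choose x hxJ hxI using fun j => SetLike.not_le_iff_exists.mp (hne j)
  have hM : ∀ j, ∃ P : MaximalSpectrum R, algebraMap R (Localization.AtPrime P.asIdeal) (x j) ∉
      I.map (algebraMap R (Localization.AtPrime P.asIdeal)) := fun j => by
    by_contra! h
    exact hxI j (Ideal.mem_of_localization_maximal fun P hP => h ⟨P, hP⟩)
  choose M hM using hM
  choose a haJ ha using fun i =>
    exists_mem_forall_dividesAt (Finset.univ.image M) (J i) fun P _ => hJ i P
  obtain ⟨k, hk⟩ := hI.2 a (hle (Ideal.prod_mem_prod fun i _ => haJ i))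
  have hdiv := DividesAt.prod (s := Finset.univ.erase k) fun i _ =>
    ha i (M k) (Finset.mem_image_of_mem M (Finset.mem_univ k))
  exact hM k ((Ideal.span_singleton_le_iff_mem _).mpr (Ideal.mem_map_of_mem _ hk)
    (hdiv (Ideal.mem_map_of_mem _ (hxJ k))))

end DividesAt

namespace IsPruferDomain

variable {R : Type*} [CommRing R] [IsDomain R]

theorem exists_add_eq_one (hR : IsPruferDomain R) (a b : R) :
    ∃ p q r s : R, p + s = 1 ∧ b * p = a * q ∧ a * s = b * r := by
  rcases eq_or_ne a 0 with rfl | ha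
  · exact ⟨0, 0, 0, 1, by ring, by ring, by ring⟩
  let K := FractionRing R
  have hinj : Function.Injective (algebraMap R K) := IsFractionRing.injective R K
  obtain ⟨J, hJ⟩ := hR (Ideal.span {a, b}) (Submodule.fg_span (Set.toFinite _))
    (fun h => ha (by simpa [h] using (Ideal.subset_span (by simp) : a ∈ Ideal.span {a, b})))
  have hint : ∀ c ∈ Ideal.span {a, b}, ∀ z ∈ J, ∃ t, algebraMap R K t = algebraMap R K c * z :=
    fun c hc z hz => (FractionalIdeal.mem_one_iff _).mp
      (hJ ▸ FractionalIdeal.mul_mem_mul (FractionalIdeal.mem_coeIdeal_of_mem _ hc) hz)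
  have h1 : (1 : K) ∈ (R ∙ algebraMap R K a ⊔ R ∙ algebraMap R K b) * (J : Submodule R K) := by
    have := FractionalIdeal.one_mem_one (nonZeroDivisors R) (P := K)
    rw [← hJ, ← FractionalIdeal.mem_coe, FractionalIdeal.coe_mul, FractionalIdeal.coe_coeIdeal,
      IsLocalization.coeSubmodule_span, Set.image_pair, Submodule.span_insert] at this
    exact this
  rw [Submodule.sup_mul, Submodule.mem_sup] at h1
  obtain ⟨_, hu, _, hv, hxy⟩ := h1
  obtain ⟨x, hx, rfl⟩ := Submodule.mem_span_singleton_mul.mp hu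
  obtain ⟨y, hy, rfl⟩ := Submodule.mem_span_singleton_mul.mp hv
  have ha' : a ∈ Ideal.span {a, b} := Ideal.subset_span (by simp)
  have hb' : b ∈ Ideal.span {a, b} := Ideal.subset_span (by simp)
  obtain ⟨p, hp⟩ := hint a ha' x hx
  obtain ⟨q, hq⟩ := hint b hb' x hx
  obtain ⟨r, hr⟩ := hint a ha' y hy
  obtain ⟨s, hs⟩ := hint b hb' y hy
  refine ⟨p, q, r, s, hinj ?_, hinj ?_, hinj ?_⟩ <;>
    simp only [map_add, map_mul, map_one, hp, hq, hr, hs]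
  · exact hxy
  · ring
  · ring

theorem valuationRing_localization (hR : IsPruferDomain R) (P : Ideal R) [P.IsPrime] :
    ValuationRing (Localization.AtPrime P) := by
  let φ := algebraMap R (Localization.AtPrime P)
  have hunit : ∀ x, x ∉ P → IsUnit (φ x) := fun x hx =>
    (IsLocalization.AtPrime.isUnit_to_map_iff _ P x).mpr hx
  have htotal : ∀ a b : R, φ a ∣ φ b ∨ φ b ∣ φ a := by
    intro a b
    obtain ⟨p, q, r, s, hps, hpq, hrs⟩ := exists_add_eq_one hR a b
    by_cases hp : p ∈ P
    · have hs : s ∉ P := fun hs => Ideal.IsPrime.ne_top ‹_›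
        ((P.eq_top_iff_one).mpr (hps ▸ P.add_mem hp hs))
      exact Or.inr ((hunit s hs).dvd_mul_right.mp ⟨φ r, by rw [← map_mul, hrs, map_mul]⟩)
    · exact Or.inl ((hunit p hp).dvd_mul_right.mp ⟨φ q, by rw [← map_mul, hpq, map_mul]⟩)
  refine ValuationRing.iff_dvd_total.mpr ⟨fun x y => ?_⟩
  obtain ⟨⟨a, s⟩, hx⟩ := IsLocalization.surj P.primeCompl x
  obtain ⟨⟨b, t⟩, hy⟩ := IsLocalization.surj P.primeCompl y
  have hs := IsLocalization.map_units (Localization.AtPrime P) s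
  have ht := IsLocalization.map_units (Localization.AtPrime P) t
  dsimp only at hx hy
  rcases htotal a b with h | h <;> rw [← hx, ← hy] at h
  · exact Or.inl (ht.dvd_mul_right.mp (hs.mul_right_dvd.mp h))
  · exact Or.inr (hs.dvd_mul_right.mp (ht.mul_right_dvd.mp h))

theorem prod_polyContent_le (hR : IsPruferDomain R) {ι : Type*} (s : Finset ι) (f : ι → R[X]) :
    ∏ i ∈ s, polyContent (f i) ≤ polyContent (∏ i ∈ s, f i) := by
  refine Ideal.le_of_localization_maximal fun P _ => ?_
  have := hR.valuationRing_localization P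
  rw [← Ideal.mapHom_apply, map_prod]
  simpa only [Ideal.mapHom_apply, polyContent_map, Polynomial.map_prod] using
    ValuationRing.prod_polyContent_le s fun i => (f i).map (algebraMap R (Localization.AtPrime P))

theorem exists_dividesAt_polyContent (hR : IsPruferDomain R) (f : R[X]) (P : Ideal R)
    [P.IsPrime] : ∃ a ∈ polyContent f, DividesAt P a (polyContent f) := by
  have := hR.valuationRing_localization P
  obtain ⟨i, hi⟩ := ValuationRing.exists_coeff_dvd (f.map (algebraMap R (Localization.AtPrime P)))
  refine ⟨f.coeff i, coeff_mem_polyContent f i, ?_⟩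
  rw [DividesAt, polyContent_map, polyContent_le_span_singleton_iff]
  simpa only [coeff_map] using hi

end IsPruferDomain

theorem isNAbsorbing_map_C_general {R : Type*} [CommRing R] [IsDomain R]
    (hR : IsPruferDomain R) (I : Ideal R) (n : ℕ)
    (hI : IsNAbsorbing I n) : IsNAbsorbing (I.map (C : R →+* R[X])) n := by
  refine ⟨fun htop => hI.1 ((Ideal.eq_top_iff_one I).mpr ?_), fun f hf => ?_⟩
  · simpa using Ideal.mem_map_C_iff.mp (htop ▸ Submodule.mem_top : (1 : R[X]) ∈ I.map C) 0
  · have hle : ∏ i, polyContent (f i) ≤ I :=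
      (hR.prod_polyContent_le _ f).trans (polyContent_le_iff_mem_map_C.mpr hf)
    obtain ⟨j, hj⟩ := hI.exists_prod_erase_le _
      (fun i P => hR.exists_dividesAt_polyContent (f i) P.asIdeal) hle
    exact ⟨j, prod_mem_map_C_of_prod_polyContent_le hj⟩

/-- Over a Prüfer domain, if `I` is `n`-absorbing then `I[X]` is `n`-absorbing. -/
theorem isNAbsorbing_map_C {R : Type*} [CommRing R] [IsDomain R]
    (hR : IsPruferDomain R) (I : Ideal R) (n : ℕ) (hn : 0 < n)
    (hI : IsNAbsorbing I n) : IsNAbsorbing (I.map (C : R →+* R[X])) n :=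
  isNAbsorbing_map_C_general hR I n hI
end
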